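/- arXiv:1804.09411 — 2 statements merged into one kernel-verified Lean document; each statement's English description precedes it below -/
import Mathlib

section
/- (Corollary: cells lie in Voronoi cells of the remaining sites.) In any stable-matching Voronoi diagram, enumerate the sites as s₁, …, sₙ with nondecreasing bounding radii, i.e., r(s₁) ≤ r(s₂) ≤ … ≤ r(sₙ). Then for every index i and every point p ∈ C(sᵢ) that does not belong to any cell C(s_j) with j > i, one has dist(p, sᵢ) ≤ dist(p, s_j) for every j > i; in other words, such a point lies in the standard Voronoi cell of sᵢ with respect to the site set {sᵢ, …, sₙ}. -/
open MeasureTheory Metric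

lemma dist_le_sSup_image_dist {α : Type*} [PseudoMetricSpace α] {C : Set α}
    (hC : Bornology.IsBounded C) (s : α) {p : α} (hp : p ∈ C) :
    dist p s ≤ sSup ((fun q => dist q s) '' C) :=
  le_csSup ((LipschitzWith.dist_left s).isBounded_image hC).bddAbove ⟨p, hp, rfl⟩

lemma dist_le_dist_of_notMem_of_le_radius {α : Type*} [PseudoMetricSpace α] {S : Finset α}
    {C : α → Set α} {r : α → ℝ}
    (hstable : ¬ ∃ s ∈ S, ∃ p : α, p ∉ C s ∧ dist p s < r s ∧
      ((∀ t ∈ S, p ∉ C t) ∨ ∃ t ∈ S, p ∈ C t ∧ dist p s < dist p t))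
    {s t p : α} (hs : s ∈ S) (ht : t ∈ S) (hp : p ∈ C s) (hpt : p ∉ C t) (hpr : dist p s ≤ r t) :
    dist p s ≤ dist p t := by
  by_contra! h
  exact hstable ⟨t, ht, p, hpt, h.trans_le hpr, Or.inr ⟨s, hs, hp, h⟩⟩

theorem cell_subset_voronoi_of_rest_general
    (S : Finset (EuclideanSpace ℝ (Fin 2)))
    (C : EuclideanSpace ℝ (Fin 2) → Set (EuclideanSpace ℝ (Fin 2)))
    (r : EuclideanSpace ℝ (Fin 2) → ℝ)
    (hr : ∀ s, r s = sSup ((fun q => dist q s) '' C s))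
    (hbdd : ∀ s ∈ S, Bornology.IsBounded (C s))
    (hstable : ¬ ∃ s ∈ S, ∃ p : EuclideanSpace ℝ (Fin 2),
      p ∉ C s ∧ dist p s < r s ∧
      ((∀ t ∈ S, p ∉ C t) ∨ ∃ t ∈ S, p ∈ C t ∧ dist p s < dist p t))
    (n : ℕ) (sites : Fin n → EuclideanSpace ℝ (Fin 2))
    (himg : (S : Set (EuclideanSpace ℝ (Fin 2))) = Set.range sites)
    (hmono : ∀ i j : Fin n, i ≤ j → r (sites i) ≤ r (sites j)) :
    ∀ i : Fin n, ∀ p ∈ C (sites i),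
      (∀ j : Fin n, i < j → p ∉ C (sites j)) →
      ∀ j : Fin n, i < j → dist p (sites i) ≤ dist p (sites j) := by
  intro i p hp hnot j hij
  have hS : ∀ k, sites k ∈ S := fun k => by
    rw [← Finset.mem_coe, himg]
    exact Set.mem_range_self k
  have hpr : dist p (sites i) ≤ r (sites i) :=
    hr (sites i) ▸ dist_le_sSup_image_dist (hbdd _ (hS i)) (sites i) hp
  exact dist_le_dist_of_notMem_of_le_radius hstable (hS i) (hS j) hp (hnot j hij)
    (hpr.trans (hmono i j hij.le))

theorem cell_subset_voronoi_of_rest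
    (S : Finset (EuclideanSpace ℝ (Fin 2)))
    (A : EuclideanSpace ℝ (Fin 2) → ℝ)
    (C : EuclideanSpace ℝ (Fin 2) → Set (EuclideanSpace ℝ (Fin 2)))
    (r : EuclideanSpace ℝ (Fin 2) → ℝ)
    (hr : ∀ s, r s = sSup ((fun q => dist q s) '' C s))
    (hA : ∀ s ∈ S, 0 < A s)
    (hclosed : ∀ s ∈ S, IsClosed (C s))
    (hbdd : ∀ s ∈ S, Bornology.IsBounded (C s))
    (hvol : ∀ s ∈ S, volume (C s) = ENNReal.ofReal (A s))
    (hint : ∀ s ∈ S, ∀ t ∈ S, s ≠ t → interior (C s) ∩ interior (C t) = ∅)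
    (hstable : ¬ ∃ s ∈ S, ∃ p : EuclideanSpace ℝ (Fin 2),
      p ∉ C s ∧ dist p s < r s ∧
      ((∀ t ∈ S, p ∉ C t) ∨ ∃ t ∈ S, p ∈ C t ∧ dist p s < dist p t))
    (n : ℕ) (sites : Fin n → EuclideanSpace ℝ (Fin 2))
    (hinj : Function.Injective sites)
    (himg : (S : Set (EuclideanSpace ℝ (Fin 2))) = Set.range sites)
    (hmono : ∀ i j : Fin n, i ≤ j → r (sites i) ≤ r (sites j)) :
    ∀ i : Fin n, ∀ p ∈ C (sites i),
      (∀ j : Fin n, i < j → p ∉ C (sites j)) →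
      ∀ j : Fin n, i < j → dist p (sites i) ≤ dist p (sites j) :=
  cell_subset_voronoi_of_rest_general S C r hr hbdd hstable n sites himg hmono
end

section
/- (Isolated sites have disk-shaped cells.) In any stable-matching Voronoi diagram, let s be a site, set ρ := √(A(s)/π), and suppose dist(s, t) > 2ρ for every other site t ≠ s. Then the open ball ball(s, ρ) is contained in C(s), and consequently volume(C(s) \ closedBall(s, ρ)) = 0; that is, up to a null set the cell of s is exactly the disk of area A(s) centered at s. -/
/-!
A point `p` of the open disk of area `A(s)` about an isolated site `s` that were not in `C(s)`
would form a blocking pair with `s`: the bounding radius of `s` is at least the radius `ρ` of that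
disk, since `C(s)` has area `A(s)` and lies in its bounding disk, and any other site `t` is farther
than `2ρ` from `s`, hence farther from `p` than `s` is. So the disk lies in `C(s)`, and since both
have area `A(s)`, they agree up to a null set.
-/

open MeasureTheory Metric

section BlockingPair

variable {X : Type*} [PseudoMetricSpace X]

/-- Blocking pairs as in condition (4), with the bounding radii `r` taken as a parameter. -/
def IsBlockingPair (S : Finset X) (C : X → Set X) (r : X → ℝ) (s p : X) : Prop :=
  p ∉ C s ∧ dist p s < r s ∧ ((∀ t ∈ S, p ∉ C t) ∨ ∃ t ∈ S, p ∈ C t ∧ dist p s < dist p t)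

theorem ball_subset_of_forall_not_isBlockingPair {S : Finset X} {C : X → Set X} {r : X → ℝ}
    {s : X} {ρ : ℝ} (hno : ∀ p, ¬ IsBlockingPair S C r s p) (hρ : ρ ≤ r s)
    (hsep : ∀ t ∈ S, t ≠ s → 2 * ρ < dist s t) : ball s ρ ⊆ C s := by
  intro p hp
  rw [mem_ball] at hp
  by_contra hpC
  refine hno p ⟨hpC, hp.trans_le hρ, ?_⟩
  by_cases hmatched : ∃ t ∈ S, p ∈ C t
  · obtain ⟨t, htS, hpt⟩ := hmatched
    have hts : t ≠ s := by rintro rfl; exact hpC hpt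
    refine Or.inr ⟨t, htS, hpt, ?_⟩
    linarith [hsep t htS hts, dist_triangle_left s t p]
  · push Not at hmatched
    exact Or.inl hmatched

end BlockingPair

theorem subset_closedBall_sSup_dist {X : Type*} [PseudoMetricSpace X] {C : Set X}
    (hC : Bornology.IsBounded C) (s : X) :
    C ⊆ closedBall s (sSup ((fun q => dist q s) '' C)) := fun q hq =>
  le_csSup ((LipschitzWith.dist_left s).isBounded_image hC).bddAbove ⟨q, hq, rfl⟩

theorem le_of_measure_ball_le_measure_closedBall {E : Type*} [NormedAddCommGroup E]
    [NormedSpace ℝ E] [MeasurableSpace E] [BorelSpace E] [FiniteDimensional ℝ E] [Nontrivial E]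
    (μ : Measure E) [μ.IsAddHaarMeasure] {x y : E} {ρ R : ℝ} (hρ : 0 < ρ)
    (h : μ (ball x ρ) ≤ μ (closedBall y R)) : ρ ≤ R := by
  by_contra! hRρ
  rcases lt_or_ge R 0 with hR | hR
  · rw [closedBall_eq_empty.2 hR, measure_empty, nonpos_iff_eq_zero] at h
    exact (measure_ball_pos μ x hρ).ne' h
  · rw [Measure.addHaar_ball μ x hρ.le, Measure.addHaar_closedBall μ y hR,
      ENNReal.mul_le_mul_iff_left (measure_ball_pos μ 0 one_pos).ne' measure_ball_lt_top.ne,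
      ENNReal.ofReal_le_ofReal_iff (by positivity)] at h
    exact h.not_gt (pow_lt_pow_left₀ hRρ hR Module.finrank_pos.ne')

theorem volume_ball_sqrt_div_pi (x : EuclideanSpace ℝ (Fin 2)) {a : ℝ} (ha : 0 ≤ a) :
    volume (ball x (Real.sqrt (a / Real.pi))) = ENNReal.ofReal a := by
  rw [EuclideanSpace.volume_ball_fin_two, ← ENNReal.ofReal_pow (Real.sqrt_nonneg _),
    Real.sq_sqrt (by positivity), ← ENNReal.ofReal_mul (by positivity),
    div_mul_cancel₀ a Real.pi_ne_zero]

theorem isolated_site_disk_cell_general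
    (S : Finset (EuclideanSpace ℝ (Fin 2)))
    (A : EuclideanSpace ℝ (Fin 2) → ℝ)
    (C : EuclideanSpace ℝ (Fin 2) → Set (EuclideanSpace ℝ (Fin 2)))
    (r : EuclideanSpace ℝ (Fin 2) → ℝ)
    (hr : ∀ s, r s = sSup ((fun q => dist q s) '' C s))
    (hA : ∀ s ∈ S, 0 < A s)
    (hbdd : ∀ s ∈ S, Bornology.IsBounded (C s))
    (hvol : ∀ s ∈ S, volume (C s) = ENNReal.ofReal (A s))
    (hstable : ¬ ∃ s ∈ S, ∃ p : EuclideanSpace ℝ (Fin 2),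
      p ∉ C s ∧ dist p s < r s ∧
      ((∀ t ∈ S, p ∉ C t) ∨ ∃ t ∈ S, p ∈ C t ∧ dist p s < dist p t))
    (s : EuclideanSpace ℝ (Fin 2)) (hs : s ∈ S)
    (hsep : ∀ t ∈ S, t ≠ s → 2 * Real.sqrt (A s / Real.pi) < dist s t) :
    ball s (Real.sqrt (A s / Real.pi)) ⊆ C s ∧
      volume (C s \ closedBall s (Real.sqrt (A s / Real.pi))) = 0 := by
  set ρ := Real.sqrt (A s / Real.pi)
  have hdisk : volume (ball s ρ) = volume (C s) := by
    rw [hvol s hs, volume_ball_sqrt_div_pi s (hA s hs).le]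
  have hρr : ρ ≤ r s := by
    refine le_of_measure_ball_le_measure_closedBall volume (x := s) (y := s)
      (Real.sqrt_pos.2 (div_pos (hA s hs) Real.pi_pos)) ?_
    rw [hdisk, hr s]
    exact measure_mono (subset_closedBall_sSup_dist (hbdd s hs) s)
  have hball : ball s ρ ⊆ C s :=
    ball_subset_of_forall_not_isBlockingPair (fun p hp => hstable ⟨s, hs, p, hp⟩) hρr hsep
  have hae : ball s ρ =ᵐ[volume] C s :=
    ae_eq_of_subset_of_measure_ge hball hdisk.ge measurableSet_ball.nullMeasurableSet
      (hdisk ▸ measure_ball_lt_top.ne)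
  refine ⟨hball, measure_mono_null (Set.sdiff_subset_sdiff_right ball_subset_closedBall) ?_⟩
  exact ae_le_set.1 hae.symm.le

theorem isolated_site_disk_cell
    (S : Finset (EuclideanSpace ℝ (Fin 2)))
    (A : EuclideanSpace ℝ (Fin 2) → ℝ)
    (C : EuclideanSpace ℝ (Fin 2) → Set (EuclideanSpace ℝ (Fin 2)))
    (r : EuclideanSpace ℝ (Fin 2) → ℝ)
    (hr : ∀ s, r s = sSup ((fun q => dist q s) '' C s))
    (hA : ∀ s ∈ S, 0 < A s)
    (hclosed : ∀ s ∈ S, IsClosed (C s))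
    (hbdd : ∀ s ∈ S, Bornology.IsBounded (C s))
    (hvol : ∀ s ∈ S, volume (C s) = ENNReal.ofReal (A s))
    (hint : ∀ s ∈ S, ∀ t ∈ S, s ≠ t → interior (C s) ∩ interior (C t) = ∅)
    (hstable : ¬ ∃ s ∈ S, ∃ p : EuclideanSpace ℝ (Fin 2),
      p ∉ C s ∧ dist p s < r s ∧
      ((∀ t ∈ S, p ∉ C t) ∨ ∃ t ∈ S, p ∈ C t ∧ dist p s < dist p t))
    (s : EuclideanSpace ℝ (Fin 2)) (hs : s ∈ S)
    (hsep : ∀ t ∈ S, t ≠ s → 2 * Real.sqrt (A s / Real.pi) < dist s t) :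
    ball s (Real.sqrt (A s / Real.pi)) ⊆ C s ∧
      volume (C s \ closedBall s (Real.sqrt (A s / Real.pi))) = 0 :=
  isolated_site_disk_cell_general S A C r hr hA hbdd hvol hstable s hs hsep
end
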